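/- arXiv:1307.7808 — 6 statements merged into one kernel-verified Lean document; each statement's English description precedes it below -/
import Mathlib

section
/- Let A₁,…,Aₙ (n ≥ 1) be actions with costs t_i ≥ 0 and success probabilities p_i ∈ (0,1] satisfying t₁/p₁ ≤ t₂/p₂ ≤ … ≤ tₙ/pₙ. Define T_{1…n−1} = Σ_{i=1}^{n−1} t_i ∏_{j<i}(1−p_j) and P_{1…n−1} = 1 − ∏_{i=1}^{n−1}(1−p_i). Then T_{1…n−1}/P_{1…n−1} ≤ tₙ/pₙ. -/
lemma prod_compl_sum (p : ℕ → ℝ) (m : ℕ) :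
    1 - ∏ i ∈ Finset.range m, (1 - p i) =
      ∑ i ∈ Finset.range m, p i * ∏ j ∈ Finset.range i, (1 - p j) := by
  induction m with
  | zero => simp
  | succ m ih =>
    rw [Finset.prod_range_succ, Finset.sum_range_succ, ← ih]
    ring

/-- Lemma on ordered actions: if the ratios `t i / p i` are sorted increasingly,
then the combined ratio of the first `n-1` actions is at most `t (n-1) / p (n-1)`. -/
theorem stmt_3 (n : ℕ) (hn : 1 ≤ n) (t p : ℕ → ℝ)
    (ht : ∀ i < n, 0 ≤ t i)
    (hp : ∀ i < n, 0 < p i ∧ p i ≤ 1)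
    (hsort : ∀ i j, i ≤ j → j < n → t i / p i ≤ t j / p j) :
    (∑ i ∈ Finset.range (n - 1), t i * ∏ j ∈ Finset.range i, (1 - p j)) /
        (1 - ∏ i ∈ Finset.range (n - 1), (1 - p i)) ≤
      t (n - 1) / p (n - 1) := by
  have hnlt : n - 1 < n := Nat.sub_lt (by omega) one_pos
  have hc : 0 ≤ t (n - 1) / p (n - 1) :=
    div_nonneg (ht _ hnlt) (hp _ hnlt).1.le
  rcases Nat.eq_or_lt_of_le hn with h1 | h2
  · simpa [← h1] using hc
  -- n ≥ 2, so n - 1 ≥ 1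
  have hm1 : 1 ≤ n - 1 := by omega
  have h0 : (0 : ℕ) < n := by omega
  have hP : 0 < 1 - ∏ i ∈ Finset.range (n - 1), (1 - p i) := by
    -- need strict: split off factor 0
    have h01 : (0 : ℕ) ∈ Finset.range (n - 1) := Finset.mem_range.mpr hm1
    -- alternative: prod ≤ (1 - p 0) directly
    have key : ∏ i ∈ Finset.range (n - 1), (1 - p i) ≤ 1 - p 0 := by
      rw [← Finset.prod_erase_mul _ _ h01]
      have hrest : ∏ i ∈ (Finset.range (n-1)).erase 0, (1 - p i) ≤ 1 := by
        apply Finset.prod_le_one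
        · intro i hi
          have hi' : i < n := by
            have := Finset.mem_range.mp (Finset.mem_of_mem_erase hi); omega
          linarith [(hp i hi').2]
        · intro i hi
          have hi' : i < n := by
            have := Finset.mem_range.mp (Finset.mem_of_mem_erase hi); omega
          linarith [(hp i hi').1]
      have hp0 : 0 ≤ 1 - p 0 := by linarith [(hp 0 h0).2]
      nlinarith
    linarith [(hp 0 h0).1]
  rw [div_le_iff₀ hP, prod_compl_sum]
  rw [Finset.mul_sum]
  apply Finset.sum_le_sum
  intro i hi
  have hi' : i < n := by
    have := Finset.mem_range.mp hi; omega
  have hpi := hp i hi'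
  have hprodnn : 0 ≤ ∏ j ∈ Finset.range i, (1 - p j) := by
    apply Finset.prod_nonneg
    intro j hj
    have hj' : j < n := by
      have := Finset.mem_range.mp hj; omega
    linarith [(hp j hj').2]
  have hti : t i ≤ t (n-1) / p (n-1) * p i := by
    have := hsort i (n-1) (by omega) hnlt
    rw [div_le_div_iff₀ hpi.1 (hp _ hnlt).1] at this
    rw [div_mul_eq_mul_div, le_div_iff₀ (hp _ hnlt).1]
    linarith
  calc t i * ∏ j ∈ Finset.range i, (1 - p j)
      ≤ (t (n-1) / p (n-1) * p i) * ∏ j ∈ Finset.range i, (1 - p j) :=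
        mul_le_mul_of_nonneg_right hti hprodnn
    _ = t (n-1) / p (n-1) * (p i * ∏ j ∈ Finset.range i, (1 - p j)) := by ring
end

section
/- Let A₁,…,Aₙ be actions with costs t_i ≥ 0 and success probabilities p_i ∈ (0,1]. Define for a permutation σ of {1,…,n} the expected cost T(σ) = Σ_{i=1}^n t_{σ(i)} ∏_{j<i}(1−p_{σ(j)}). If the identity ordering satisfies t₁/p₁ ≤ t₂/p₂ ≤ … ≤ tₙ/pₙ, then T(id) ≤ T(σ) for every permutation σ. -/
/-!
Writing the cost of an ordering recursively, `T(a :: l) = t a + (1 - p a) T(l)`, an exchange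
argument shows that pulling an action of minimal ratio `t / p` to the front of any ordering does
not increase its cost. Repeating this, every ordering costs at least as much as one sorted by
`t / p`.
-/

open Finset

noncomputable def expectedCost {α : Type*} (t p : α → ℝ) : List α → ℝ
  | [] => 0
  | a :: l => t a + (1 - p a) * expectedCost t p l

theorem Fin.prod_Iio_succ {M : Type*} [CommMonoid M] {n : ℕ} (f : Fin (n + 1) → M)
    (i : Fin n) : ∏ j ∈ Iio i.succ, f j = f 0 * ∏ j ∈ Iio i, f j.succ := by
  rw [Iio_eq_Ico, bot_eq_zero, ← Ioo_insert_left (Fin.succ_pos i), prod_insert (by simp),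
    ← Fin.map_succEmb_Iio, prod_map]
  rfl

section

variable {α : Type*} (t p : α → ℝ)

theorem sum_mul_prod_Iio_eq_expectedCost {n : ℕ} (f : Fin n → α) :
    ∑ i : Fin n, t (f i) * ∏ j ∈ Iio i, (1 - p (f j)) = expectedCost t p (List.ofFn f) := by
  induction n with
  | zero => simp [expectedCost]
  | succ n ih =>
    simp only [Fin.sum_univ_succ, List.ofFn_succ, expectedCost, Fin.prod_Iio_succ,
      ← ih (fun i ↦ f i.succ), mul_sum]
    simp [mul_left_comm, ← bot_eq_zero]

variable {t p}

theorem expectedCost_cons_erase_le [DecidableEq α] (hp : ∀ a, p a ≤ 1) {l : List α} {x : α}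
    (hx : x ∈ l) (hmin : ∀ b ∈ l, t x * p b ≤ t b * p x) :
    expectedCost t p (x :: l.erase x) ≤ expectedCost t p l := by
  induction l with
  | nil => cases hx
  | cons a l ih =>
    by_cases hxa : x = a
    · subst hxa
      rw [List.erase_cons_head]
    · have hxl : x ∈ l := (List.mem_cons.mp hx).resolve_left hxa
      have ih' := ih hxl fun b hb ↦ hmin b (List.mem_cons_of_mem a hb)
      have hcross := hmin a List.mem_cons_self
      have hqa : 0 ≤ 1 - p a := sub_nonneg.mpr (hp a)
      rw [List.erase_cons_tail (by simpa using Ne.symm hxa)]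
      simp only [expectedCost] at ih' ⊢
      -- swapping `x` and `a` changes the cost by `t x * p a - t a * p x ≤ 0`
      nlinarith [mul_le_mul_of_nonneg_left ih' hqa]

theorem expectedCost_le_of_perm [DecidableEq α] (hp : ∀ a, p a ≤ 1) {s l : List α}
    (hs : s.Pairwise fun a b ↦ t a * p b ≤ t b * p a) (hl : l.Perm s) :
    expectedCost t p s ≤ expectedCost t p l := by
  induction s generalizing l with
  | nil => rw [List.perm_nil.mp hl]
  | cons m s ih =>
    obtain ⟨hm, hs⟩ := List.pairwise_cons.mp hs
    have hml : m ∈ l := hl.mem_iff.mpr List.mem_cons_self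
    have hrest : (l.erase m).Perm s := ((List.perm_cons_erase hml).symm.trans hl).cons_inv
    have hfront : expectedCost t p (m :: l.erase m) ≤ expectedCost t p l := by
      refine expectedCost_cons_erase_le hp hml fun b hb ↦ ?_
      rcases List.mem_cons.mp (hl.mem_iff.mp hb) with rfl | hb
      · rfl
      · exact hm b hb
    refine le_trans ?_ hfront
    simp only [expectedCost]
    gcongr
    · linarith [hp m]
    · exact ih hs hrest

end

theorem stmt_4_general (n : ℕ) (t p : Fin n → ℝ)
    (hp : ∀ i, 0 < p i ∧ p i ≤ 1)
    (hsort : ∀ i j : Fin n, i ≤ j → t i / p i ≤ t j / p j) :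
    ∀ σ : Equiv.Perm (Fin n),
      (∑ i : Fin n, t i * ∏ j ∈ Finset.Iio i, (1 - p j)) ≤
        ∑ i : Fin n, t (σ i) * ∏ j ∈ Finset.Iio i, (1 - p (σ j)) := by
  intro σ
  rw [sum_mul_prod_Iio_eq_expectedCost t p (fun i ↦ i), sum_mul_prod_Iio_eq_expectedCost t p σ]
  refine expectedCost_le_of_perm (fun i ↦ (hp i).2) ?_ (σ.ofFn_comp_perm id)
  rw [List.pairwise_ofFn]
  intro i j hij
  exact (div_le_div_iff₀ (hp i).1 (hp j).1).mp (hsort i j hij.le)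

/-- The choose primitive is optimal: if `t i / p i` is increasing in `i`, then
the identity ordering minimizes the expected cost over all permutations. -/
theorem stmt_4 (n : ℕ) (t p : Fin n → ℝ)
    (ht : ∀ i, 0 ≤ t i)
    (hp : ∀ i, 0 < p i ∧ p i ≤ 1)
    (hsort : ∀ i j : Fin n, i ≤ j → t i / p i ≤ t j / p j) :
    ∀ σ : Equiv.Perm (Fin n),
      (∑ i : Fin n, t i * ∏ j ∈ Finset.Iio i, (1 - p j)) ≤
        ∑ i : Fin n, t (σ i) * ∏ j ∈ Finset.Iio i, (1 - p (σ j)) :=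
  stmt_4_general n t p hp hsort
end

section
/- In an ordered execution of actions until first success, swapping two adjacent actions A_k and A_{k+1} that satisfy t_k/p_k > t_{k+1}/p_{k+1} strictly decreases the expected total cost: formally, for any prefix probability q = ∏_{j<k}(1−p_j) > 0, costs t_k, t_{k+1} ≥ 0 with t_{k+1} > 0 or t_k > 0, and p_k, p_{k+1} ∈ (0,1] with t_k·p_{k+1} > t_{k+1}·p_k, we have q·(t_{k+1} + (1−p_{k+1})t_k) < q·(t_k + (1−p_k)t_{k+1}), while all other terms of the expected cost sum are unchanged by the swap. -/
/-- Swapping two adjacent out-of-order actions strictly decreases the expected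
cost contribution of their two positions, while all other terms of the expected
cost sum are unchanged. -/
theorem stmt_5 (t p : ℕ → ℝ) (k : ℕ) (q : ℝ)
    (hq : q = ∏ j ∈ Finset.range k, (1 - p j)) (hq0 : 0 < q)
    (htk : 0 ≤ t k) (htk1 : 0 ≤ t (k + 1))
    (hpos : 0 < t (k + 1) ∨ 0 < t k)
    (hpk : 0 < p k) (hpk' : p k ≤ 1)
    (hpk1 : 0 < p (k + 1)) (hpk1' : p (k + 1) ≤ 1)
    (hswap : t k * p (k + 1) > t (k + 1) * p k) :
    q * (t (k + 1) + (1 - p (k + 1)) * t k) < q * (t k + (1 - p k) * t (k + 1)) ∧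
    ∀ i, i ≠ k → i ≠ k + 1 →
      (t ∘ Equiv.swap k (k + 1)) i *
          ∏ j ∈ Finset.range i, (1 - (p ∘ Equiv.swap k (k + 1)) j) =
        t i * ∏ j ∈ Finset.range i, (1 - p j) := by
  constructor
  · have h : t (k + 1) + (1 - p (k + 1)) * t k < t k + (1 - p k) * t (k + 1) := by
      nlinarith
    exact mul_lt_mul_of_pos_left h hq0
  · intro i hik hik1
    have ht : (t ∘ Equiv.swap k (k + 1)) i = t i := by
      simp [Equiv.swap_apply_of_ne_of_ne hik hik1]
    rw [ht]
    congr 1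
    rcases lt_or_ge k i with hlt | hle
    · -- k < i and i ≠ k+1, so k+1 < i; swap has support ⊆ range i
      have hk1 : k + 1 < i := lt_of_le_of_ne hlt (Ne.symm hik1)
      have := Equiv.Perm.prod_comp (Equiv.swap k (k + 1)) (Finset.range i)
        (fun j => 1 - p j) ?_
      · exact this
      · intro a ha
        simp only [Set.mem_setOf_eq] at ha
        have : a = k ∨ a = k + 1 := by
          by_contra hc
          push_neg at hc
          exact ha (Equiv.swap_apply_of_ne_of_ne hc.1 hc.2)
        rcases this with rfl | rfl <;> simp [Finset.mem_range] <;> omega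
    · -- i ≤ k, hence i < k; swap fixes all j < i
      apply Finset.prod_congr rfl
      intro j hj
      simp only [Finset.mem_range] at hj
      have hj1 : j ≠ k := by omega
      have hj2 : j ≠ k + 1 := by omega
      simp [Equiv.swap_apply_of_ne_of_ne hj1 hj2]
end

section
/- Let A₁,…,Aₙ be actions with costs t_i ≥ 0 and probabilities p_i ∈ [0,1) satisfying t₁/(1−p₁) ≤ … ≤ tₙ/(1−pₙ). Define for a permutation σ the AND-group expected cost T_G(σ) = Σ_{i=1}^n t_{σ(i)} ∏_{j<i} p_{σ(j)}. Then T_G(id) ≤ T_G(σ) for every permutation σ. -/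
/-!
The cost of a sequence satisfies `T(a :: l) = t a + p a * T(l)`, so it is monotone in the cost of
the tail, and exchanging the first two actions `a, b` lowers it by `t a (1 - p b) - t b (1 - p a)`,
which is nonnegative when `t b / (1 - p b) ≤ t a / (1 - p a)`. Insertion sort by index only makes
such exchanges, so it never increases the cost, and it turns any permutation into the identity.
-/

open Finset

/-- Expected cost of running the actions of a list in order until the first failure. -/
def andCost {α : Type*} (t p : α → ℝ) : List α → ℝ :=
  List.foldr (fun a c => t a + p a * c) 0

section AndCost

variable {α : Type*} {t p : α → ℝ}

@[simp]
theorem andCost_nil : andCost t p [] = 0 := rfl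

@[simp]
theorem andCost_cons (a : α) (l : List α) :
    andCost t p (a :: l) = t a + p a * andCost t p l := rfl

theorem andCost_ofFn {n : ℕ} (v : Fin n → α) :
    andCost t p (List.ofFn v) = ∑ i, t (v i) * ∏ j ∈ Iio i, p (v j) := by
  induction n with
  | zero => simp
  | succ n ih =>
    have hIio : Iio (0 : Fin (n + 1)) = ∅ := Iio_eq_empty.2 isMin_bot
    simp [ih, Fin.sum_univ_succ, Fin.prod_Iio_succ, hIio, mul_sum, mul_left_comm]

theorem andCost_cons_le_cons {a : α} {l l' : List α} (ha : 0 ≤ p a)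
    (h : andCost t p l ≤ andCost t p l') : andCost t p (a :: l) ≤ andCost t p (a :: l') := by
  simpa using mul_le_mul_of_nonneg_left h ha

theorem andCost_swap_le {a b : α} (ha : p a < 1) (hb : p b < 1)
    (hab : t b / (1 - p b) ≤ t a / (1 - p a)) (l : List α) :
    andCost t p (b :: a :: l) ≤ andCost t p (a :: b :: l) := by
  rw [div_le_div_iff₀ (sub_pos.2 hb) (sub_pos.2 ha)] at hab
  simp only [andCost_cons]
  linarith

variable [LinearOrder α] (hp₀ : ∀ a, 0 ≤ p a) (hp₁ : ∀ a, p a < 1)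
  (hmono : Monotone fun a => t a / (1 - p a))
include hp₀ hp₁ hmono

theorem andCost_orderedInsert_le (a : α) (l : List α) :
    andCost t p (l.orderedInsert (· ≤ ·) a) ≤ andCost t p (a :: l) := by
  induction l with
  | nil => rfl
  | cons b l ih =>
    by_cases hab : a ≤ b
    · rw [List.orderedInsert_cons_of_le _ _ hab]
    · rw [List.orderedInsert_of_not_le _ _ hab]
      calc andCost t p (b :: l.orderedInsert (· ≤ ·) a)
          ≤ andCost t p (b :: a :: l) := andCost_cons_le_cons (hp₀ b) ih
        _ ≤ andCost t p (a :: b :: l) :=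
          andCost_swap_le (hp₁ a) (hp₁ b) (hmono (not_le.1 hab).le) l

theorem andCost_insertionSort_le (l : List α) :
    andCost t p (l.insertionSort (· ≤ ·)) ≤ andCost t p l := by
  induction l with
  | nil => rfl
  | cons a l ih =>
    calc andCost t p ((l.insertionSort (· ≤ ·)).orderedInsert (· ≤ ·) a)
        ≤ andCost t p (a :: l.insertionSort (· ≤ ·)) :=
          andCost_orderedInsert_le hp₀ hp₁ hmono a _
      _ ≤ andCost t p (a :: l) := andCost_cons_le_cons (hp₀ a) ih

theorem andCost_le_of_perm_of_pairwise {l l' : List α} (hperm : l.Perm l')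
    (hsorted : l.Pairwise (· ≤ ·)) : andCost t p l ≤ andCost t p l' := by
  have hsort_eq : l'.insertionSort (· ≤ ·) = l :=
    ((l'.perm_insertionSort _).trans hperm.symm).eq_of_pairwise'
      (l'.pairwise_insertionSort _) hsorted
  exact hsort_eq ▸ andCost_insertionSort_le hp₀ hp₁ hmono l'

end AndCost

theorem stmt_7_general (n : ℕ) (t p : Fin n → ℝ)
    (hp : ∀ i, 0 ≤ p i ∧ p i < 1)
    (hsort : ∀ i j : Fin n, i ≤ j → t i / (1 - p i) ≤ t j / (1 - p j)) :
    ∀ σ : Equiv.Perm (Fin n),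
      (∑ i : Fin n, t i * ∏ j ∈ Finset.Iio i, p j) ≤
        ∑ i : Fin n, t (σ i) * ∏ j ∈ Finset.Iio i, p (σ j) := by
  intro σ
  have hsorted : (List.ofFn (id : Fin n → Fin n)).Pairwise (· ≤ ·) :=
    List.pairwise_ofFn.2 fun _ _ hij => hij.le
  simpa only [andCost_ofFn, Function.id_comp, id] using
    andCost_le_of_perm_of_pairwise (fun i => (hp i).1) (fun i => (hp i).2) hsort
      (σ.ofFn_comp_perm id).symm hsorted

/-- AND-group optimal ordering: if `t i / (1 - p i)` is increasing in `i`, the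
identity ordering minimizes the AND-group expected cost over all permutations. -/
theorem stmt_7 (n : ℕ) (t p : Fin n → ℝ)
    (ht : ∀ i, 0 ≤ t i)
    (hp : ∀ i, 0 ≤ p i ∧ p i < 1)
    (hsort : ∀ i j : Fin n, i ≤ j → t i / (1 - p i) ≤ t j / (1 - p j)) :
    ∀ σ : Equiv.Perm (Fin n),
      (∑ i : Fin n, t i * ∏ j ∈ Finset.Iio i, p j) ≤
        ∑ i : Fin n, t (σ i) * ∏ j ∈ Finset.Iio i, p (σ j) :=
  stmt_7_general n t p hp hsort
end

section
/- For an ordered sequence of actions A₁,…,Aₙ executed until first success, with t_i ≥ 0, p_i ∈ (0,1], and t₁/p₁ ≤ … ≤ tₙ/pₙ, the cost-to-probability ratio of prefixes is monotone: for every 1 ≤ k < n, T_{1…k}/P_{1…k} ≤ T_{1…k+1}/P_{1…k+1}, where T_{1…k} = Σ_{i≤k} t_i ∏_{j<i}(1−p_j) and P_{1…k} = 1 − ∏_{i≤k}(1−p_i). -/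
lemma stmt_8_aux (n : ℕ) (t p : ℕ → ℝ)
    (ht : ∀ i < n, 0 ≤ t i)
    (hp : ∀ i < n, 0 < p i ∧ p i ≤ 1)
    (hsort : ∀ i j, i ≤ j → j < n → t i / p i ≤ t j / p j) :
    ∀ k, k < n →
      (∑ i ∈ Finset.range k, t i * ∏ j ∈ Finset.range i, (1 - p j)) * p k ≤
        t k * (1 - ∏ i ∈ Finset.range k, (1 - p i)) := by
  intro k
  induction k with
  | zero => simp
  | succ k IH =>
    intro hk1
    have hk : k < n := Nat.lt_of_succ_lt hk1
    have IH' := IH hk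
    have hQ : (0:ℝ) ≤ ∏ j ∈ Finset.range k, (1 - p j) :=
      Finset.prod_nonneg (fun j hj => by
        have := hp j (lt_of_lt_of_le (Finset.mem_range.mp hj) (Nat.le_of_lt hk))
        linarith [this.2])
    have hP : ∏ j ∈ Finset.range k, (1 - p j) ≤ 1 :=
      Finset.prod_le_one
        (fun j hj => by
          have := hp j (lt_of_lt_of_le (Finset.mem_range.mp hj) (Nat.le_of_lt hk))
          linarith [this.2])
        (fun j hj => by
          have := hp j (lt_of_lt_of_le (Finset.mem_range.mp hj) (Nat.le_of_lt hk))
          linarith [this.1])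
    have hpk := hp k hk
    have hpk1 := hp (k+1) hk1
    have htk := ht k hk
    have hratio : t k * p (k+1) ≤ t (k+1) * p k := by
      have h := hsort k (k+1) (Nat.le_succ k) hk1
      rw [div_le_div_iff₀ hpk.1 hpk1.1] at h
      exact h
    rw [Finset.sum_range_succ, Finset.prod_range_succ]
    nlinarith [mul_nonneg hQ (mul_nonneg htk hpk1.1.le),
      mul_le_mul_of_nonneg_left hratio hQ,
      mul_le_mul_of_nonneg_right IH' hpk1.1.le,
      mul_nonneg (mul_nonneg (sub_nonneg.mpr hP) htk) hpk1.1.le,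
      mul_le_mul_of_nonneg_left hratio (sub_nonneg.mpr hP)]

/-- For a sorted OR-sequence, the cost-to-probability ratio of prefixes is
monotone in the prefix length. -/
theorem stmt_8 (n : ℕ) (t p : ℕ → ℝ)
    (ht : ∀ i < n, 0 ≤ t i)
    (hp : ∀ i < n, 0 < p i ∧ p i ≤ 1)
    (hsort : ∀ i j, i ≤ j → j < n → t i / p i ≤ t j / p j) :
    ∀ k, 1 ≤ k → k < n →
      (∑ i ∈ Finset.range k, t i * ∏ j ∈ Finset.range i, (1 - p j)) /
          (1 - ∏ i ∈ Finset.range k, (1 - p i)) ≤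
        (∑ i ∈ Finset.range (k + 1), t i * ∏ j ∈ Finset.range i, (1 - p j)) /
          (1 - ∏ i ∈ Finset.range (k + 1), (1 - p i)) := by
  intro k hk1 hkn
  have haux := stmt_8_aux n t p ht hp hsort k hkn
  have hfac : ∀ j < n, (0:ℝ) ≤ 1 - p j ∧ 1 - p j < 1 := fun j hj => by
    have := hp j hj; constructor <;> linarith [this.1, this.2]
  have hQ : (0:ℝ) ≤ ∏ j ∈ Finset.range k, (1 - p j) :=
    Finset.prod_nonneg fun j hj =>
      (hfac j (lt_trans (Finset.mem_range.mp hj) hkn)).1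
  have hPk : (0:ℝ) < 1 - ∏ i ∈ Finset.range k, (1 - p i) := by
    have h0 : 0 < p 0 := (hp 0 (by omega)).1
    have : ∏ i ∈ Finset.range k, (1 - p i) < 1 := by
      obtain ⟨m, rfl⟩ : ∃ m, k = m + 1 := ⟨k - 1, by omega⟩
      have hrest : ∏ i ∈ Finset.range m, (1 - p (i+1)) ≤ 1 :=
        Finset.prod_le_one
          (fun j hj => (hfac (j+1) (by have := Finset.mem_range.mp hj; omega)).1)
          (fun j hj => by
            have := (hp (j+1) (by have := Finset.mem_range.mp hj; omega)).1
            linarith)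
      have hrest0 : (0:ℝ) ≤ ∏ i ∈ Finset.range m, (1 - p (i+1)) :=
        Finset.prod_nonneg
          (fun j hj => (hfac (j+1) (by have := Finset.mem_range.mp hj; omega)).1)
      rw [Finset.prod_range_succ']
      nlinarith [mul_le_mul_of_nonneg_right hrest (show (0:ℝ) ≤ 1 - p 0 by
        linarith [(hp 0 (by omega)).2])]
    linarith

  have hPk1 : (0:ℝ) < 1 - ∏ i ∈ Finset.range (k+1), (1 - p i) := by
    rw [Finset.prod_range_succ]
    have hpk := hp k hkn
    nlinarith [hQ]
  rw [div_le_div_iff₀ hPk hPk1, Finset.sum_range_succ, Finset.prod_range_succ]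
  have htk := ht k hkn
  have hpk := hp k hkn
  nlinarith [mul_le_mul_of_nonneg_left haux hQ, hQ, mul_nonneg hQ htk]
end

section
/- Let groups G₁,…,Gₙ each consist of a totally ordered list of actions, all of whose actions must succeed for the group to achieve the goal. In an execution policy that interleaves actions from different groups (respecting each group's internal order) and stops when some group completes all its actions successfully, there is an optimal policy (minimizing expected total cost) that executes the groups one at a time: i.e., it never begins an action of a new group before the currently attempted group has either failed or fully succeeded. -/
/-!
The exchange argument: if an action of `g` is not the last one of its group, running an action
of another group `h` just before it instead of just after it never costs more. Both orders reach
the same states with the same probabilities, except that when `h`'s action completes its group,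
the order with `h` first stops without paying for `g`'s action. An action of `g` is known to be
non-final when the schedule still contains another action of `g` and does not ask for more
actions than remain (`Feasible`); this invariant is why cost comparisons are made only from
feasible states (`CostLE`). Comparisons survive prepending an action, so by induction on the
schedule every schedule has a block rearrangement that is no more expensive: put the head action
in front of the blocks of the tail and postpone it into its own group's block, if there is one.
A block schedule of least cost among the finitely many group orders is therefore optimal.
-/

open List

variable {n : ℕ}

/-- Expected cost of executing an interleaved schedule of group actions.
`s` is the schedule (each entry names a group; an entry executes the next
remaining action of that group), `rem` gives each group's remaining list of
(cost, success probability) actions, and `alive` records which groups have not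
yet failed.  Execution of an action of a dead group is skipped; on a success of
a group's last action, the whole execution stops (the group has achieved the
goal); on a failure, the group dies. -/
noncomputable def expCost : List (Fin n) → (Fin n → List (ℝ × ℝ)) → (Fin n → Bool) → ℝ
  | [], _, _ => 0
  | g :: rest, rem, alive =>
    if alive g then
      match rem g with
      | [] => expCost rest rem alive
      | (tp : ℝ × ℝ) :: tail =>
          tp.1 +
            tp.2 * (if tail = [] then 0 else expCost rest (Function.update rem g tail) alive) +
            (1 - tp.2) * expCost rest rem (Function.update alive g false)
    else expCost rest rem alive

/-- A schedule is valid if, respecting each group's internal order, it executes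
exactly the actions of each group: group `g` occurs `(L g).length` times. -/
def ValidSchedule (L : Fin n → List (ℝ × ℝ)) (s : List (Fin n)) : Prop :=
  ∀ g : Fin n, s.count g = (L g).length

/-- A block schedule executes the groups one at a time, in the order given by
some permutation of all the groups. -/
def BlockSchedule (L : Fin n → List (ℝ × ℝ)) (s : List (Fin n)) : Prop :=
  ∃ order : List (Fin n), order.Perm (List.finRange n) ∧
    s = order.flatMap (fun g => List.replicate (L g).length g)

open Function

section Blocks

variable {α : Type*}

def blocks (c : α → ℕ) (ord : List α) : List α :=
  ord.flatMap fun g => replicate (c g) g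

lemma blocks_cons (c : α → ℕ) (x : α) (ord : List α) :
    blocks c (x :: ord) = replicate (c x) x ++ blocks c ord :=
  flatMap_cons

lemma blocks_append_cons (c : α → ℕ) (ord₁ ord₂ : List α) (x : α) :
    blocks c (ord₁ ++ x :: ord₂) = blocks c ord₁ ++ replicate (c x) x ++ blocks c ord₂ := by
  simp [blocks, flatMap_append, append_assoc]

lemma blocks_congr {c c' : α → ℕ} {ord : List α} (h : ∀ g ∈ ord, c g = c' g) :
    blocks c ord = blocks c' ord :=
  flatMap_congr fun g hg => by rw [h g hg]

lemma not_mem_blocks {c : α → ℕ} {ord : List α} {y : α} (hy : y ∉ ord) :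
    y ∉ blocks c ord := by
  simp only [blocks, mem_flatMap, mem_replicate]
  rintro ⟨g, hg, -, rfl⟩
  exact hy hg

lemma count_blocks [DecidableEq α] (c : α → ℕ) {ord : List α} (hnd : ord.Nodup) {y : α}
    (hy : y ∈ ord) : (blocks c ord).count y = c y := by
  obtain ⟨o₁, o₂, rfl⟩ := append_of_mem hy
  have hy' : y ∉ o₁ ++ o₂ := (nodup_cons.1 (nodup_middle.1 hnd)).1
  rw [blocks_append_cons, count_append, count_append,
    count_eq_zero.2 (not_mem_blocks fun h => hy' (mem_append_left o₂ h)),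
    count_eq_zero.2 (not_mem_blocks fun h => hy' (mem_append_right o₁ h)), count_replicate_self]
  simp

end Blocks

section Cost

def Admissible (rem : Fin n → List (ℝ × ℝ)) : Prop :=
  ∀ g, ∀ tp ∈ rem g, 0 ≤ tp.1 ∧ 0 ≤ tp.2 ∧ tp.2 ≤ 1

lemma Admissible.update {rem : Fin n → List (ℝ × ℝ)} (hadm : Admissible rem) {g : Fin n}
    {tp : ℝ × ℝ} {tail : List (ℝ × ℝ)} (hr : rem g = tp :: tail) :
    Admissible (Function.update rem g tail) := by
  intro g' tq hm
  rcases eq_or_ne g' g with rfl | hne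
  · rw [update_self] at hm
    exact hadm g' tq (by rw [hr]; exact mem_cons_of_mem _ hm)
  · rw [update_of_ne hne] at hm
    exact hadm g' tq hm

def Feasible (w : List (Fin n)) (rem : Fin n → List (ℝ × ℝ)) : Prop :=
  ∀ g, w.count g ≤ (rem g).length

lemma Feasible.of_perm {w w' : List (Fin n)} {rem : Fin n → List (ℝ × ℝ)} (hp : w.Perm w')
    (h : Feasible w' rem) : Feasible w rem := fun g => (hp.count_eq g).trans_le (h g)

lemma Feasible.of_cons {x : Fin n} {w : List (Fin n)} {rem : Fin n → List (ℝ × ℝ)}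
    (h : Feasible (x :: w) rem) : Feasible w rem :=
  fun g => (count_le_count_cons ..).trans (h g)

lemma Feasible.update_of_cons {x : Fin n} {w : List (Fin n)} {rem : Fin n → List (ℝ × ℝ)}
    {tp : ℝ × ℝ} {tail : List (ℝ × ℝ)} (hr : rem x = tp :: tail)
    (h : Feasible (x :: w) rem) : Feasible w (Function.update rem x tail) := by
  intro g
  rcases eq_or_ne g x with rfl | hne
  · have := h g
    rw [count_cons_self, hr, length_cons] at this
    rw [update_self]
    omega
  · rw [update_of_ne hne]
    exact h.of_cons g

lemma skip_or_active (g : Fin n) (rem : Fin n → List (ℝ × ℝ)) (alive : Fin n → Bool) :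
    (alive g = false ∨ rem g = []) ∨ ∃ tp tail, alive g = true ∧ rem g = tp :: tail := by
  cases alive g <;> cases rem g <;> simp

lemma expCost_cons_of_skip {g : Fin n} {v : List (Fin n)} {rem : Fin n → List (ℝ × ℝ)}
    {alive : Fin n → Bool} (h : alive g = false ∨ rem g = []) :
    expCost (g :: v) rem alive = expCost v rem alive := by
  rcases h with h | h <;> simp [expCost, h]

lemma expCost_cons_of_active {g : Fin n} {v : List (Fin n)} {rem : Fin n → List (ℝ × ℝ)}
    {alive : Fin n → Bool} {tp : ℝ × ℝ} {tail : List (ℝ × ℝ)}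
    (ha : alive g = true) (hr : rem g = tp :: tail) :
    expCost (g :: v) rem alive = tp.1 +
      tp.2 * (if tail = [] then 0 else expCost v (Function.update rem g tail) alive) +
      (1 - tp.2) * expCost v rem (Function.update alive g false) := by
  simp [expCost, ha, hr]

lemma expCost_cons_cons_of_skip {x y : Fin n} (hxy : x ≠ y) {v : List (Fin n)}
    {rem : Fin n → List (ℝ × ℝ)} {alive : Fin n → Bool}
    (hx : alive x = false ∨ rem x = []) :
    expCost (y :: x :: v) rem alive = expCost (y :: v) rem alive := by
  rcases skip_or_active y rem alive with hy | ⟨tp, tail, ha, hr⟩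
  · rw [expCost_cons_of_skip hy, expCost_cons_of_skip hy, expCost_cons_of_skip hx]
  · rw [expCost_cons_of_active ha hr, expCost_cons_of_active ha hr,
      expCost_cons_of_skip (rem := Function.update rem y tail) (by rwa [update_of_ne hxy]),
      expCost_cons_of_skip (alive := Function.update alive y false) (by rwa [update_of_ne hxy])]

lemma expCost_swap_le_of_active {g h : Fin n} (hgh : g ≠ h) (v : List (Fin n))
    {rem : Fin n → List (ℝ × ℝ)} {alive : Fin n → Bool} {tp sq : ℝ × ℝ}
    {tail th : List (ℝ × ℝ)} (hag : alive g = true) (hrg : rem g = tp :: tail)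
    (htail : tail ≠ []) (hah : alive h = true) (hrh : rem h = sq :: th)
    (ht : 0 ≤ tp.1) (hq : 0 ≤ sq.2) :
    expCost (h :: g :: v) rem alive ≤ expCost (g :: h :: v) rem alive := by
  rw [expCost_cons_of_active hah hrh, expCost_cons_of_active hag hrg,
    expCost_cons_of_active (rem := Function.update rem h th) hag (by rwa [update_of_ne hgh]),
    expCost_cons_of_active (alive := Function.update alive h false)
      (by rwa [update_of_ne hgh]) hrg,
    expCost_cons_of_active (rem := Function.update rem g tail) hah
      (by rwa [update_of_ne hgh.symm]),
    expCost_cons_of_active (alive := Function.update alive g false)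
      (by rwa [update_of_ne hgh.symm]) hrh,
    update_comm hgh.symm th tail rem, update_comm hgh.symm false false alive, if_neg htail]
  split_ifs
  · nlinarith [mul_nonneg hq ht]
  · exact le_of_eq (by ring)

lemma expCost_swap_le {g h : Fin n} (hgh : g ≠ h) (v : List (Fin n))
    {rem : Fin n → List (ℝ × ℝ)} {alive : Fin n → Bool} (hadm : Admissible rem)
    (hlen : 2 ≤ (rem g).length) :
    expCost (h :: g :: v) rem alive ≤ expCost (g :: h :: v) rem alive := by
  rcases skip_or_active g rem alive with hg | ⟨tp, tail, hag, hrg⟩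
  · rw [expCost_cons_cons_of_skip hgh hg, expCost_cons_of_skip hg]
  rcases skip_or_active h rem alive with hh | ⟨sq, th, hah, hrh⟩
  · rw [expCost_cons_of_skip hh, expCost_cons_cons_of_skip hgh.symm hh]
  have htail : tail ≠ [] := by
    rintro rfl
    simp [hrg] at hlen
  exact expCost_swap_le_of_active hgh v hag hrg htail hah hrh
    (hadm g tp (by simp [hrg])).1 (hadm h sq (by simp [hrh])).2.1

end Cost

section Rearrangement

def CostLE (X Y : List (Fin n)) : Prop :=
  X.Perm Y ∧ ∀ rem alive, Admissible rem → Feasible Y rem →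
    expCost X rem alive ≤ expCost Y rem alive

lemma CostLE.refl (X : List (Fin n)) : CostLE X X :=
  ⟨Perm.refl X, fun _ _ _ _ => le_rfl⟩

lemma CostLE.trans {X Y Z : List (Fin n)} (hXY : CostLE X Y) (hYZ : CostLE Y Z) :
    CostLE X Z :=
  ⟨hXY.1.trans hYZ.1, fun rem alive hadm hZ =>
    (hXY.2 rem alive hadm (hZ.of_perm hYZ.1)).trans (hYZ.2 rem alive hadm hZ)⟩

lemma CostLE.cons (x : Fin n) {X Y : List (Fin n)} (h : CostLE X Y) :
    CostLE (x :: X) (x :: Y) := by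
  refine ⟨h.1.cons x, fun rem alive hadm hY => ?_⟩
  rcases skip_or_active x rem alive with hx | ⟨tp, tail, ha, hr⟩
  · rw [expCost_cons_of_skip hx, expCost_cons_of_skip hx]
    exact h.2 rem alive hadm hY.of_cons
  have hp := hadm x tp (by simp [hr])
  have hfail := h.2 rem (Function.update alive x false) hadm hY.of_cons
  rw [expCost_cons_of_active ha hr, expCost_cons_of_active ha hr]
  split_ifs
  · gcongr
    linarith [hp.2.2]
  · have hsucc := h.2 _ alive (hadm.update hr) (hY.update_of_cons hr)
    gcongr
    · exact hp.2.1
    · linarith [hp.2.2]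

lemma costLE_swap {g h : Fin n} (hgh : g ≠ h) {v : List (Fin n)} (hv : g ∈ v) :
    CostLE (h :: g :: v) (g :: h :: v) := by
  refine ⟨Perm.swap g h v, fun rem alive hadm hY => expCost_swap_le hgh v hadm ?_⟩
  have := hY g
  rw [count_cons_self, count_cons_of_ne hgh.symm] at this
  have := count_pos_iff.2 hv
  omega

lemma costLE_postpone {x : Fin n} {W : List (Fin n)} (hW : x ∈ W) :
    ∀ {f : List (Fin n)}, x ∉ f → CostLE (f ++ x :: W) (x :: (f ++ W))
  | [], _ => CostLE.refl _
  | c :: f, hf => by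
    have hxc : x ≠ c := fun h => hf (h ▸ mem_cons_self)
    exact ((costLE_postpone hW fun h => hf (mem_cons_of_mem c h)).cons c).trans
      (costLE_swap hxc (mem_append_right f hW))

theorem exists_blocks_costLE (w : List (Fin n)) :
    ∃ ord : List (Fin n), ord.Perm (finRange n) ∧ CostLE (blocks (w.count ·) ord) w := by
  induction w with
  | nil => exact ⟨finRange n, Perm.refl _, by
      convert CostLE.refl []
      simp [blocks, flatMap_eq_nil_iff]⟩
  | cons x t ih =>
    obtain ⟨ord, hperm, hle⟩ := ih
    obtain ⟨o₁, o₂, rfl⟩ := append_of_mem (hperm.mem_iff.2 (mem_finRange x))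
    have hx : x ∉ o₁ ++ o₂ :=
      (nodup_cons.1 (nodup_middle.1 (hperm.nodup_iff.2 (nodup_finRange n)))).1
    have hcount : ∀ o ⊆ o₁ ++ o₂, blocks ((x :: t).count ·) o = blocks (t.count ·) o :=
      fun o ho => blocks_congr fun g hg =>
        count_cons_of_ne fun h => hx (by rw [h]; exact ho hg)
    have hcons := hle.cons x
    rw [blocks_append_cons] at hcons
    by_cases hxt : x ∈ t
    · refine ⟨o₁ ++ x :: o₂, hperm, ?_⟩
      rw [blocks_append_cons, hcount o₁ (subset_append_left _ _),
        hcount o₂ (subset_append_right _ _), count_cons_self, replicate_succ, append_assoc,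
        cons_append]
      refine (costLE_postpone ?_ (not_mem_blocks fun h => hx (mem_append_left o₂ h))).trans ?_
      · exact mem_append_left _ (mem_replicate.2 ⟨(count_pos_iff.2 hxt).ne', rfl⟩)
      · simpa [append_assoc] using hcons
    · refine ⟨x :: (o₁ ++ o₂), perm_middle.symm.trans hperm, ?_⟩
      rw [blocks_cons, hcount _ (Subset.refl _), count_cons_self, count_eq_zero.2 hxt]
      simpa [blocks, flatMap_append, count_eq_zero.2 hxt] using hcons

end Rearrangement

/-- Among all interleaved execution policies (schedules respecting each group's
internal order, stopping when some group completes all its actions), there is an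
optimal one—minimizing expected total cost—that executes the groups one at a
time. -/
theorem stmt_12 (L : Fin n → List (ℝ × ℝ))
    (hL : ∀ g, ∀ tp ∈ L g, 0 ≤ tp.1 ∧ 0 < tp.2 ∧ tp.2 ≤ 1) :
    ∃ s : List (Fin n), BlockSchedule L s ∧ ValidSchedule L s ∧
      ∀ s' : List (Fin n), ValidSchedule L s' →
        expCost s L (fun _ => true) ≤ expCost s' L (fun _ => true) := by
  have hadm : Admissible L := fun g tp h => ⟨(hL g tp h).1, (hL g tp h).2.1.le, (hL g tp h).2.2⟩
  obtain ⟨ord, hord, hmin⟩ := (finRange n).permutations.toFinset.exists_min_image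
    (fun o => expCost (blocks (fun g => (L g).length) o) L fun _ => true)
    ⟨finRange n, by simp⟩
  rw [mem_toFinset, mem_permutations] at hord
  refine ⟨_, ⟨ord, hord, rfl⟩, fun g => ?_, fun s' hs' => ?_⟩
  · exact count_blocks _ (hord.nodup_iff.2 (nodup_finRange n)) (hord.mem_iff.2 (mem_finRange g))
  obtain ⟨ord', hord', hle⟩ := exists_blocks_costLE s'
  rw [show (s'.count ·) = fun g => (L g).length from funext hs'] at hle
  exact (hmin ord' (by simpa using hord')).trans
    (hle.2 L _ hadm fun g => (hs' g).le)
end
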